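/- Let R = ℂ[a,b,c]/(ab - c³) and let M₁ = (a,c) and M₂ = (a,c²) be the ideals of R generated by {a,c} and {a,c²} respectively. Then there is a short exact sequence of R-modules 0 → M₂ → R² → M₁ → 0, where R² → M₁ sends (r₁,r₂) ↦ r₁a + r₂c. -/
import Mathlib


open MvPolynomial

set_option maxRecDepth 8000
set_option maxHeartbeats 1000000

noncomputable section

/-- The hypersurface ring `R = ℂ[a,b,c]/(ab - c³)`. -/
abbrev HypersurfaceRing : Type :=
  MvPolynomial (Fin 3) ℂ ⧸
    Ideal.span {(X 0 * X 1 - X 2 ^ 3 : MvPolynomial (Fin 3) ℂ)}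

/-- The image of `a` in `R`. -/
abbrev elA : HypersurfaceRing := Ideal.Quotient.mk _ (X 0)
/-- The image of `b` in `R`. -/
abbrev elB : HypersurfaceRing := Ideal.Quotient.mk _ (X 1)
/-- The image of `c` in `R`. -/
abbrev elC : HypersurfaceRing := Ideal.Quotient.mk _ (X 2)

/-- The ideal `M₁ = (a, c)` of `R`. -/
abbrev idealM₁ : Ideal HypersurfaceRing := Ideal.span {elA, elC}
/-- The ideal `M₂ = (a, c²)` of `R`. -/
abbrev idealM₂ : Ideal HypersurfaceRing := Ideal.span {elA, elC ^ 2}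


namespace SyzygyAux

abbrev B := MvPolynomial (Fin 2) ℂ
abbrev A := MvPolynomial (Fin 3) ℂ

lemma keyPoly (p q h : Polynomial B)
    (heq : p * Polynomial.X + q * Polynomial.C (X 1) =
      h * (Polynomial.X * Polynomial.C (X 0) - Polynomial.C (X 1) ^ 3)) :
    ∃ s, q = Polynomial.X * s - Polynomial.C (X 1) ^ 2 * h ∧
      p = Polynomial.C (X 0) * h - Polynomial.C (X 1) * s := by
  have hc3 : (Polynomial.C (X 1 : B) ^ 3).coeff 0 = X 1 ^ 3 := by
    rw [← Polynomial.C_pow, Polynomial.coeff_C_zero]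
  have h0 := congrArg (fun r => Polynomial.coeff r 0) heq
  simp [Polynomial.mul_coeff_zero, Polynomial.coeff_X_zero, mul_sub] at h0
  rw [hc3] at h0
  have hq0 : q.coeff 0 = -(h.coeff 0 * X 1 ^ 2) := by
    have hx1 : (X 1 : B) ≠ 0 := MvPolynomial.X_ne_zero 1
    apply mul_right_cancel₀ hx1
    rw [h0]; ring
  have hdvd : Polynomial.X ∣ (q + Polynomial.C (X 1) ^ 2 * h) := by
    rw [Polynomial.X_dvd_iff]
    rw [Polynomial.coeff_add, Polynomial.mul_coeff_zero, hq0]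
    rw [← Polynomial.C_pow, Polynomial.coeff_C_zero]
    ring
  obtain ⟨s, hs⟩ := hdvd
  refine ⟨s, by rw [← hs]; ring, ?_⟩
  have hq : q = Polynomial.X * s - Polynomial.C (X 1) ^ 2 * h := by rw [← hs]; ring
  have hx : p * Polynomial.X = (Polynomial.C (X 0) * h - Polynomial.C (X 1) * s) * Polynomial.X := by
    rw [hq] at heq
    linear_combination heq
  exact mul_right_cancel₀ Polynomial.X_ne_zero hx

lemma keyReg (u h : Polynomial B)
    (heq : u * Polynomial.X =
      h * (Polynomial.X * Polynomial.C (X 0) - Polynomial.C (X 1) ^ 3)) :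
    ∃ h', u = h' * (Polynomial.X * Polynomial.C (X 0) - Polynomial.C (X 1) ^ 3) := by
  have hc3 : (Polynomial.C (X 1 : B) ^ 3).coeff 0 = X 1 ^ 3 := by
    rw [← Polynomial.C_pow, Polynomial.coeff_C_zero]
  have h0 := congrArg (fun r => Polynomial.coeff r 0) heq
  simp [Polynomial.mul_coeff_zero, Polynomial.coeff_X_zero, mul_sub] at h0
  rw [hc3] at h0
  have hh0 : h.coeff 0 = 0 := by
    rcases h0 with h1 | h2
    · exact h1
    · exact absurd h2 (pow_ne_zero _ (MvPolynomial.X_ne_zero 1))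
  obtain ⟨h', hh'⟩ := Polynomial.X_dvd_iff.mpr hh0
  refine ⟨h', ?_⟩
  apply mul_right_cancel₀ (Polynomial.X_ne_zero (R := B))
  rw [heq, hh']; ring

def e : A ≃ₐ[ℂ] Polynomial B := finSuccEquiv ℂ 2

lemma e0 : e (X 0) = Polynomial.X := finSuccEquiv_X_zero
lemma e1 : e (X 1) = Polynomial.C (X 0) := by
  have : (X 1 : A) = X (Fin.succ 0) := by norm_num
  rw [e, this, finSuccEquiv_X_succ]
lemma e2 : e (X 2) = Polynomial.C (X 1) := by
  have : (X 2 : A) = X (Fin.succ 1) := by norm_num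
  rw [e, this, finSuccEquiv_X_succ]

lemma keyA (P Q H : A) (heq : P * X 0 + Q * X 2 = H * (X 0 * X 1 - X 2 ^ 3)) :
    ∃ S : A, Q = X 0 * S - X 2 ^ 2 * H ∧ P = X 1 * H - X 2 * S := by
  have heq' : e P * Polynomial.X + e Q * Polynomial.C (X 1) =
      e H * (Polynomial.X * Polynomial.C (X 0) - Polynomial.C (X 1) ^ 3) := by
    have h := congrArg e heq
    simp only [map_add, map_mul, map_sub, map_pow, e0, e1, e2] at h
    exact h
  obtain ⟨s, hq, hp⟩ := keyPoly _ _ _ heq'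
  refine ⟨e.symm s, ?_, ?_⟩
  · apply e.injective
    rw [map_sub, map_mul, map_mul, map_pow, e0, e2, AlgEquiv.apply_symm_apply, hq]
  · apply e.injective
    rw [map_sub, map_mul, map_mul, e1, e2, AlgEquiv.apply_symm_apply, hp]

lemma regA (U H : A) (heq : U * X 0 = H * (X 0 * X 1 - X 2 ^ 3)) :
    ∃ H' : A, U = H' * (X 0 * X 1 - X 2 ^ 3) := by
  have heq' : e U * Polynomial.X =
      e H * (Polynomial.X * Polynomial.C (X 0) - Polynomial.C (X 1) ^ 3) := by
    have h := congrArg e heq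
    simp only [map_add, map_mul, map_sub, map_pow, e0, e1, e2] at h
    exact h
  obtain ⟨h', hh'⟩ := keyReg _ _ heq'
  refine ⟨e.symm h', ?_⟩
  apply e.injective
  rw [map_mul, map_sub, map_mul, map_pow, e0, e1, e2, AlgEquiv.apply_symm_apply, hh']

abbrev R := HypersurfaceRing
abbrev fpoly : A := X 0 * X 1 - X 2 ^ 3
abbrev I : Ideal A := Ideal.span {fpoly}
abbrev mk : A →+* R := Ideal.Quotient.mk I

lemma mk_surj : Function.Surjective mk := Ideal.Quotient.mk_surjective

lemma a_reg {y z : R} (h : elA * y = elA * z) : y = z := by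
  obtain ⟨U, hU⟩ := mk_surj (y - z)
  have h0 : mk (U * X 0) = 0 := by
    rw [map_mul, hU]
    have : elA = mk (X 0) := rfl
    rw [mul_comm, ← this]
    rw [mul_sub, h]; ring
  rw [Ideal.Quotient.eq_zero_iff_mem, Ideal.mem_span_singleton'] at h0
  obtain ⟨H, hH⟩ := h0
  obtain ⟨H', hH'⟩ := regA U H hH.symm
  have hf0 : mk (X 0 * X 1 - X 2 ^ 3) = 0 :=
    Ideal.Quotient.eq_zero_iff_mem.mpr (Ideal.subset_span rfl)
  have : mk U = 0 := by rw [hH', map_mul, hf0, mul_zero]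
  rw [hU] at this
  exact sub_eq_zero.mp this

lemma c3 : elC ^ 3 = elA * elB := by
  have : elC ^ 3 - elA * elB = mk (X 2 ^ 3 - X 0 * X 1) := by
    simp [map_sub, map_pow, map_mul]
  have h2 : mk (X 2 ^ 3 - X 0 * X 1) = 0 := by
    rw [Ideal.Quotient.eq_zero_iff_mem]
    have : (X 2 ^ 3 - X 0 * X 1 : A) = -fpoly := by ring
    rw [this]
    exact neg_mem (Ideal.subset_span rfl)
  have := this.trans h2
  linear_combination this

lemma hexists (x : idealM₂) : ∃ y : R, elA * y = elC * (x : R) := by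
  obtain ⟨u, v, huv⟩ := Ideal.mem_span_pair.mp x.2
  refine ⟨u * elC + v * elB, ?_⟩
  rw [← huv]
  linear_combination -v * c3
  
def psi : idealM₂ →ₗ[R] R where
  toFun x := Classical.choose (hexists x)
  map_add' x y := by
    apply a_reg
    have h1 := Classical.choose_spec (hexists (x + y))
    have h2 := Classical.choose_spec (hexists x)
    have h3 := Classical.choose_spec (hexists y)
    have hc : ((x + y : idealM₂) : R) = (x : R) + (y : R) := rfl
    linear_combination h1 - h2 - h3 + elC * hc
  map_smul' r x := by
    apply a_reg
    have h1 := Classical.choose_spec (hexists (r • x))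
    have h2 := Classical.choose_spec (hexists x)
    have hc : ((r • x : idealM₂) : R) = r * (x : R) := rfl
    simp only [RingHom.id_apply, smul_eq_mul]
    linear_combination h1 - r * h2 + elC * hc

lemma psi_spec (x : idealM₂) : elA * psi x = elC * (x : R) :=
  Classical.choose_spec (hexists x)

def gmap : (R × R) →ₗ[R] idealM₁ where
  toFun p := ⟨p.1 * elA + p.2 * elC, Ideal.mem_span_pair.mpr ⟨p.1, p.2, rfl⟩⟩
  map_add' p q := by apply Subtype.ext; simp; ring
  map_smul' r p := by apply Subtype.ext; simp; ring

def fmap : idealM₂ →ₗ[R] (R × R) := psi.prod (-(idealM₂.subtype))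

lemma fmap_apply (x : idealM₂) : fmap x = (psi x, -(x : R)) := rfl

end SyzygyAux

/-- In `R = ℂ[a,b,c]/(ab - c³)`, there is a short exact sequence of `R`-modules
`0 → (a, c²) → R² → (a, c) → 0`, where the second map sends `(r₁, r₂) ↦ r₁ a + r₂ c`;
i.e. the syzygy of `M₁ = (a,c)` is `M₂ = (a,c²)`. -/
theorem syzygy_of_M₁ :
    ∃ g : (HypersurfaceRing × HypersurfaceRing) →ₗ[HypersurfaceRing] idealM₁,
      (∀ r₁ r₂ : HypersurfaceRing, (g (r₁, r₂) : HypersurfaceRing) = r₁ * elA + r₂ * elC) ∧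
      Function.Surjective g ∧
      ∃ f : idealM₂ →ₗ[HypersurfaceRing] (HypersurfaceRing × HypersurfaceRing),
        Function.Injective f ∧ Function.Exact f g := by
  classical
  open SyzygyAux in
  refine ⟨gmap, fun r₁ r₂ => rfl, ?_, fmap, ?_, ?_⟩
  · rintro ⟨m, hm⟩
    obtain ⟨u, v, huv⟩ := Ideal.mem_span_pair.mp hm
    exact ⟨(u, v), Subtype.ext huv⟩
  · intro x y hxy
    rw [fmap_apply, fmap_apply, Prod.ext_iff] at hxy
    exact Subtype.ext (neg_injective hxy.2)
  · intro p
    constructor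
    · intro hp
      have hval : p.1 * elA + p.2 * elC = 0 := Subtype.ext_iff.mp hp
      obtain ⟨P, hP⟩ := mk_surj p.1
      obtain ⟨Q, hQ⟩ := mk_surj p.2
      have hmem : mk (P * X 0 + Q * X 2) = 0 := by
        rw [map_add, map_mul, map_mul, hP, hQ]
        exact hval
      rw [Ideal.Quotient.eq_zero_iff_mem, Ideal.mem_span_singleton'] at hmem
      obtain ⟨H, hH⟩ := hmem
      obtain ⟨S, hQS, hPS⟩ := keyA P Q H hH.symm
      have hr2 : p.2 = elA * mk S - elC ^ 2 * mk H := by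
        rw [← hQ, hQS]; simp [map_sub, map_mul, map_pow]
      have hr1 : p.1 = elB * mk H - elC * mk S := by
        rw [← hP, hPS]; simp [map_sub, map_mul]
      have hx2 : elC ^ 2 * mk H - elA * mk S ∈ idealM₂ :=
        Ideal.mem_span_pair.mpr ⟨-(mk S), mk H, by ring⟩
      refine ⟨⟨elC ^ 2 * mk H - elA * mk S, hx2⟩, ?_⟩
      rw [fmap_apply, Prod.ext_iff]
      constructor
      · apply a_reg
        have hspec := psi_spec ⟨elC ^ 2 * mk H - elA * mk S, hx2⟩
        have hcoe : ((⟨elC ^ 2 * mk H - elA * mk S, hx2⟩ : idealM₂) : R)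
            = elC ^ 2 * mk H - elA * mk S := rfl
        rw [hcoe] at hspec
        rw [hr1]
        linear_combination hspec + (mk H) * c3
      · show -(elC ^ 2 * mk H - elA * mk S) = p.2
        rw [hr2]; ring
    · rintro ⟨x, rfl⟩
      apply Subtype.ext
      have hspec := psi_spec x
      rw [fmap_apply]
      show (psi x) * elA + (-(x : R)) * elC = 0
      linear_combination hspec


end
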